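/- For any (k,n)-bounded affine permutation f and any d ≥ 1, the cyclic Demazure crystal B_f(dω_k) is nonempty; in fact it contains the tableaux T_{I_1},...,T_{I_n} associated to the Grassmann necklace of f. -/

import Mathlib

/-!
A key tableau `T_V`, whose `r`-th row is constantly the `r`-th smallest element of `V`, is sent
by the Bender–Knuth involution `t_i` to `T_{s_i V}`, so promotion acts on key tableaux through the
cycle `(1 2 ⋯ n)`: `χ(T_V) = T_{χ V}`. Hence `T_{I_e} = χ^{a-1}(T_{χ^{1-a} I_e})`, and it remains
to show that `χ^{1-a} I_e` dominates `χ^{1-a} I_a` entrywise, i.e. that `I_a` is Gale-minimal in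
the necklace for the cyclic order starting at `a`.

For this, view `f` as a family of chords `u ↦ f u`. Then `I_x` is the set of ends (mod `n`) of
the chords passing over `x`; there are always `k` of them, and comparing, for `x = a` and
`x = e`, how many of them end in a cyclic window `[a, a + t)` gives the Gale inequalities.
-/

/-- `T` is a semistandard Young tableau of rectangular shape with `k` rows and `d`
columns, with entries in `{1,…,n}`: rows weakly increase, columns strictly increase.
(The values of `T` outside the rectangle are irrelevant.) -/
def IsSSYT (k d n : ℕ) (T : ℕ → ℕ → ℕ) : Prop :=
  (∀ r c, r < k → c < d → 1 ≤ T r c ∧ T r c ≤ n) ∧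
  (∀ r c, r < k → c + 1 < d → T r c ≤ T r (c + 1)) ∧
  (∀ r c, r + 1 < k → c < d → T r c < T (r + 1) c)

/-- A cell `(r,c)` of a tableau with `k` rows is *free* for the Bender–Knuth toggle `t_i`:
an entry `i` is free if the cell directly below does not contain `i+1`, and an entry
`i+1` is free if the cell directly above does not contain `i`. -/
def bkFree (k i : ℕ) (T : ℕ → ℕ → ℕ) (r c : ℕ) : Prop :=
  (T r c = i ∧ (r + 1 = k ∨ T (r + 1) c ≠ i + 1)) ∨
  (T r c = i + 1 ∧ (r = 0 ∨ T (r - 1) c ≠ i))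

open Classical in
/-- The Bender–Knuth involution `t_i` on (the rectangle `k × d` of) a tableau: in each
row, if the free entries consist of `a` letters `i` followed by `b` letters `i+1`,
replace them by `b` letters `i` followed by `a` letters `i+1`. -/
noncomputable def bk (k d i : ℕ) (T : ℕ → ℕ → ℕ) : ℕ → ℕ → ℕ := fun r c =>
  let F := (Finset.range d).filter fun c' => bkFree k i T r c'
  if c ∈ F then
    if (F.filter fun c' => c' < c).card < (F.filter fun c' => T r c' = i + 1).card
    then i else i + 1
  else T r c

/-- Promotion `χ` on semistandard tableaux with entries in `{1,…,n}`, computed as the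
composite of Bender–Knuth involutions `t_1 ∘ t_2 ∘ ⋯ ∘ t_{n-1}`.  This is the standard
equivalent description of jeu-de-taquin promotion (delete the `n`'s, slide the remaining
entries to the bottom right, add one to every entry, fill the vacated boxes with `1`'s). -/
noncomputable def promo (k d n : ℕ) (T : ℕ → ℕ → ℕ) : ℕ → ℕ → ℕ :=
  (((List.range (n - 1)).map (· + 1)).foldr (fun i acc => bk k d i acc) T)

/-- A `(k,n)`-bounded affine permutation: a bijection `f : ℤ → ℤ` with
`f(i+n) = f(i) + n`, `∑_{i=1}^n f(i) = C(n+1,2) + kn`, and `i ≤ f(i) ≤ i + n`. -/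
def IsBAP (k n : ℕ) (f : ℤ → ℤ) : Prop :=
  Function.Bijective f ∧ (∀ i, f (i + n) = f i + n) ∧
  (∑ i ∈ Finset.Icc (1 : ℤ) (n : ℤ), f i) = ((n + 1).choose 2 : ℤ) + (k : ℤ) * n ∧
  ∀ i, i ≤ f i ∧ f i ≤ i + n

/-- The representative in `{1,…,n}` of an integer modulo `n`. -/
def res (n : ℕ) (x : ℤ) : ℕ := ((x - 1) % (n : ℤ) + 1).toNat

/-- The Grassmann necklace of `f`: `I_a = { f(b) mod n : b < a, f(b) ≥ a }` with
representatives taken in `{1,…,n}` (only `b ∈ [a-n, a-1]` can contribute, by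
boundedness). -/
noncomputable def necklaceOf (n : ℕ) (f : ℤ → ℤ) : ℕ → Finset ℕ := fun a =>
  ((Finset.Icc ((a : ℤ) - n) ((a : ℤ) - 1)).filter fun b => (a : ℤ) ≤ f b).image
    fun b => res n (f b)

/-- Normalization of a tableau: set all values outside the `k × d` rectangle to `0`. -/
def normTab (k d : ℕ) (T : ℕ → ℕ → ℕ) : ℕ → ℕ → ℕ := fun r c =>
  if r < k ∧ c < d then T r c else 0

/-- Promotion followed by normalization outside the rectangle. -/
noncomputable def promoN (k d n : ℕ) : (ℕ → ℕ → ℕ) → (ℕ → ℕ → ℕ) := fun T =>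
  normTab k d (promo k d n T)

/-- The cyclic rotation `χ` on subsets of `{1,…,n}`: add `1` mod `n` to each element. -/
def shiftSet (n : ℕ) (S : Finset ℕ) : Finset ℕ := S.image fun x => x % n + 1

/-- The tableau `T_I` of shape `d^k` whose `r`-th row is filled with the `r`-th smallest
element of `I` (normalized to `0` outside the rectangle). -/
def tabOf (k d : ℕ) (I : Finset ℕ) : ℕ → ℕ → ℕ := fun r c =>
  if r < k ∧ c < d then (I.sort (· ≤ ·)).getD r 0 else 0

/-- The Demazure crystal `B_I(dω_k)`: normalized semistandard tableaux of shape `d^k`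
with entries in `{1,…,n}` which are entry-wise `≥ T_I`. -/
def BIset (k d n : ℕ) (I : Finset ℕ) : Set (ℕ → ℕ → ℕ) :=
  {T | IsSSYT k d n T ∧ (∀ r c, r < k → c < d → tabOf k d I r c ≤ T r c) ∧
    ∀ r c, ¬(r < k ∧ c < d) → T r c = 0}

/-- The cyclic Demazure crystal
`B_f(dω_k) = ⋂_{a=1}^n χ^{a-1}(B_{χ^{1-a}(I_a)}(dω_k))`, where `(I_1,…,I_n)` is the
Grassmann necklace of `f`, `χ` acts on tableaux by promotion and on subsets by cyclic
rotation (and `χ^{1-a} = χ^{n+1-a}`). -/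
noncomputable def cyclicDemazure (k d n : ℕ) (f : ℤ → ℤ) : Set (ℕ → ℕ → ℕ) :=
  ⋂ a ∈ Finset.Icc 1 n, (promoN k d n)^[a - 1] ''
    BIset k d n ((shiftSet n)^[n + 1 - a] (necklaceOf n f a))

open Finset

namespace Finset

def nthLeast (V : Finset ℕ) (r : ℕ) : ℕ := (V.sort (· ≤ ·)).getD r 0

variable {V : Finset ℕ} {r s t : ℕ}

theorem nthLeast_eq_orderEmbOfFin (hr : r < #V) : V.nthLeast r = V.orderEmbOfFin rfl ⟨r, hr⟩ := by
  rw [nthLeast, List.getD_eq_getElem _ _ (by simpa using hr), orderEmbOfFin_apply]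
  rfl

theorem nthLeast_mem (hr : r < #V) : V.nthLeast r ∈ V := by
  rw [nthLeast_eq_orderEmbOfFin hr]
  exact orderEmbOfFin_mem _ _ _

theorem nthLeast_lt_nthLeast_iff (hr : r < #V) (hs : s < #V) :
    V.nthLeast r < V.nthLeast s ↔ r < s := by
  rw [nthLeast_eq_orderEmbOfFin hr, nthLeast_eq_orderEmbOfFin hs, OrderEmbedding.lt_iff_lt,
    Fin.mk_lt_mk]

theorem nthLeast_le_nthLeast_iff (hr : r < #V) (hs : s < #V) :
    V.nthLeast r ≤ V.nthLeast s ↔ r ≤ s := by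
  simpa only [not_lt] using (nthLeast_lt_nthLeast_iff hs hr).not

theorem exists_nthLeast_eq {x : ℕ} (hx : x ∈ V) : ∃ r < #V, V.nthLeast r = x := by
  have : x ∈ Set.range (V.orderEmbOfFin rfl) := by simpa using hx
  obtain ⟨⟨r, hr⟩, rfl⟩ := this
  exact ⟨r, hr, nthLeast_eq_orderEmbOfFin hr⟩

theorem nthLeast_image {g : ℕ → ℕ} (hg : StrictMonoOn g V) (hr : r < #V) :
    (V.image g).nthLeast r = g (V.nthLeast r) := by
  have hcard : #(V.image g) = #V := card_image_of_injOn hg.injOn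
  have key := orderEmbOfFin_unique hcard (f := fun i => g (V.orderEmbOfFin rfl i))
    (fun i => mem_image_of_mem g (orderEmbOfFin_mem _ _ _))
    (fun i j hij => hg (orderEmbOfFin_mem _ _ _) (orderEmbOfFin_mem _ _ _)
      ((V.orderEmbOfFin rfl).strictMono hij))
  rw [nthLeast_eq_orderEmbOfFin (hcard ▸ hr), nthLeast_eq_orderEmbOfFin hr]
  exact (congrFun key ⟨r, hr⟩).symm

theorem nthLeast_le_iff (hr : r < #V) : V.nthLeast r ≤ t ↔ r < #(V.filter (· ≤ t)) := by
  constructor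
  · intro h
    have hsub : (range (r + 1)).image V.nthLeast ⊆ V.filter (· ≤ t) := by
      intro x hx
      obtain ⟨s, hs, rfl⟩ := mem_image.mp hx
      have hs : s ≤ r := Nat.lt_succ_iff.mp (mem_range.mp hs)
      exact mem_filter.mpr ⟨nthLeast_mem (hs.trans_lt hr),
        ((nthLeast_le_nthLeast_iff (hs.trans_lt hr) hr).mpr hs).trans h⟩
    have hinj : Set.InjOn V.nthLeast (range (r + 1)) := fun a ha b hb hab => by
      simp only [coe_range, Set.mem_Iio] at ha hb
      exact le_antisymm ((nthLeast_le_nthLeast_iff (by omega) (by omega)).mp hab.le)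
        ((nthLeast_le_nthLeast_iff (by omega) (by omega)).mp hab.ge)
    simpa [card_image_of_injOn hinj] using card_le_card hsub
  · intro h
    by_contra! hlt
    have hsub : V.filter (· ≤ t) ⊆ (range r).image V.nthLeast := by
      intro x hx
      obtain ⟨hxV, hxt⟩ := mem_filter.mp hx
      obtain ⟨s, hs, rfl⟩ := exists_nthLeast_eq hxV
      exact mem_image_of_mem _ (mem_range.mpr
        ((nthLeast_lt_nthLeast_iff hs hr).mp (hxt.trans_lt hlt)))
    have := (card_le_card hsub).trans card_image_le
    simp only [card_range] at this
    omega

theorem nthLeast_le_nthLeast_of_card_filter_le {A B : Finset ℕ} (hAB : #A = #B)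
    (h : ∀ t, #(B.filter (· ≤ t)) ≤ #(A.filter (· ≤ t))) (hr : r < #A) :
    A.nthLeast r ≤ B.nthLeast r :=
  (nthLeast_le_iff hr).mpr <|
    ((nthLeast_le_iff (hAB ▸ hr)).mp le_rfl).trans_le (h _)

theorem eq_add_one_of_nthLeast_eq_add_one (hr : r < #V) (hs : s < #V)
    (h : V.nthLeast s = V.nthLeast r + 1) : s = r + 1 := by
  have hrs : r < s := (nthLeast_lt_nthLeast_iff hr hs).mp (by omega)
  by_contra hne
  have h1 := (nthLeast_lt_nthLeast_iff hr (s := r + 1) (by omega)).mpr (by omega)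
  have h2 := (nthLeast_lt_nthLeast_iff (r := r + 1) (by omega) hs).mpr (by omega)
  omega

theorem nthLeast_add_one_mem_iff (hr : r < #V) :
    V.nthLeast r + 1 ∈ V ↔ r + 1 < #V ∧ V.nthLeast (r + 1) = V.nthLeast r + 1 := by
  refine ⟨fun h => ?_, fun h => h.2 ▸ nthLeast_mem h.1⟩
  obtain ⟨s, hs, hsv⟩ := exists_nthLeast_eq h
  obtain rfl := eq_add_one_of_nthLeast_eq_add_one hr hs hsv
  exact ⟨hs, hsv⟩

theorem image_swap_of_mem_iff {i j : ℕ} (h : i ∈ V ↔ j ∈ V) : V.image (Equiv.swap i j) = V := by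
  ext x
  rw [mem_image]
  constructor
  · rintro ⟨y, hy, rfl⟩
    rcases eq_or_ne y i with rfl | hyi
    · simpa using h.mp hy
    rcases eq_or_ne y j with rfl | hyj
    · simpa using h.mpr hy
    rwa [Equiv.swap_apply_of_ne_of_ne hyi hyj]
  · intro hx
    refine ⟨Equiv.swap i j x, ?_, Equiv.swap_apply_self _ _ _⟩
    rcases eq_or_ne x i with rfl | hxi
    · simpa using h.mp hx
    rcases eq_or_ne x j with rfl | hxj
    · simpa using h.mpr hx
    rwa [Equiv.swap_apply_of_ne_of_ne hxi hxj]

theorem strictMonoOn_swap {i : ℕ} (h : ¬(i ∈ V ↔ i + 1 ∈ V)) :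
    StrictMonoOn (Equiv.swap i (i + 1)) V := by
  have hboth : ¬(i ∈ V ∧ i + 1 ∈ V) := fun hi => h ⟨fun _ => hi.2, fun _ => hi.1⟩
  intro x hx y hy hxy
  simp only [mem_coe, Equiv.swap_apply_def] at *
  split_ifs <;> subst_vars <;> first | omega | exact absurd ⟨hx, hy⟩ hboth

end Finset

section KeyTableau

variable {k d n : ℕ} {V : Finset ℕ} {r c : ℕ}

theorem tabOf_of_lt (hr : r < k) (hc : c < d) : tabOf k d V r c = V.nthLeast r := if_pos ⟨hr, hc⟩

theorem tabOf_of_not_lt (h : ¬(r < k ∧ c < d)) : tabOf k d V r c = 0 := if_neg h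

theorem isSSYT_tabOf (hV : V ⊆ Icc 1 n) (hcard : #V = k) : IsSSYT k d n (tabOf k d V) := by
  subst hcard
  refine ⟨fun r c hr hc => ?_, fun r c hr hc => ?_, fun r c hr hc => ?_⟩
  · rw [tabOf_of_lt hr hc]
    exact mem_Icc.mp (hV (nthLeast_mem hr))
  · rw [tabOf_of_lt hr (by omega), tabOf_of_lt hr hc]
  · rw [tabOf_of_lt (by omega) hc, tabOf_of_lt hr hc]
    exact (nthLeast_lt_nthLeast_iff (by omega) hr).mpr (by omega)

theorem bkFree_tabOf_iff {i : ℕ} (hcard : #V = k) (hr : r < k) (hc : c < d) :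
    bkFree k i (tabOf k d V) r c ↔
      (V.nthLeast r = i ∧ i + 1 ∉ V) ∨ (V.nthLeast r = i + 1 ∧ i ∉ V) := by
  subst hcard
  have below : (r + 1 = #V ∨ tabOf #V d V (r + 1) c ≠ V.nthLeast r + 1) ↔
      V.nthLeast r + 1 ∉ V := by
    rw [nthLeast_add_one_mem_iff hr]
    by_cases h : r + 1 < #V
    · rw [tabOf_of_lt h hc]; omega
    · omega
  have above : V.nthLeast r = i + 1 →
      ((r = 0 ∨ tabOf #V d V (r - 1) c ≠ i) ↔ i ∉ V) := by
    intro hv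
    suffices (r ≠ 0 ∧ tabOf #V d V (r - 1) c = i) ↔ i ∈ V by
      rw [← this, not_and_or, not_not]
    constructor
    · rintro ⟨hr0, hi⟩
      rw [tabOf_of_lt (by omega) hc] at hi
      exact hi ▸ nthLeast_mem (by omega)
    · intro hi
      obtain ⟨s, hs, rfl⟩ := exists_nthLeast_eq hi
      obtain rfl := eq_add_one_of_nthLeast_eq_add_one hs hr hv
      exact ⟨by omega, tabOf_of_lt hs hc⟩
  unfold bkFree
  rw [tabOf_of_lt hr hc]
  constructor
  · rintro (⟨rfl, h⟩ | ⟨hv, h⟩)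
    · exact Or.inl ⟨rfl, below.mp h⟩
    · exact Or.inr ⟨hv, (above hv).mp h⟩
  · rintro (⟨rfl, h⟩ | ⟨hv, h⟩)
    · exact Or.inl ⟨rfl, below.mpr h⟩
    · exact Or.inr ⟨hv, (above hv).mpr h⟩


open Classical in
theorem filter_bkFree_tabOf {i : ℕ} (hcard : #V = k) (hr : r < k) :
    (range d).filter (bkFree k i (tabOf k d V) r ·) =
      if (V.nthLeast r = i ∧ i + 1 ∉ V) ∨ (V.nthLeast r = i + 1 ∧ i ∉ V) then range d else ∅ := by
  split_ifs with hP
  · exact filter_true_of_mem fun c hc => (bkFree_tabOf_iff hcard hr (mem_range.mp hc)).mpr hP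
  · exact filter_false_of_mem fun c hc => by rwa [bkFree_tabOf_iff hcard hr (mem_range.mp hc)]

open Classical in
theorem bk_tabOf {i : ℕ} (hi : 1 ≤ i) (hcard : #V = k) :
    bk k d i (tabOf k d V) = tabOf k d (V.image (Equiv.swap i (i + 1))) := by
  funext r c
  simp only [bk]
  by_cases hrc : r < k ∧ c < d
  swap
  · have hc : c ∉ (range d).filter (bkFree k i (tabOf k d V) r ·) := by
      intro hmem
      have hfree := (mem_filter.mp hmem).2
      rw [bkFree, tabOf_of_not_lt hrc] at hfree
      omega
    rw [if_neg hc, tabOf_of_not_lt hrc, tabOf_of_not_lt hrc]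
  obtain ⟨hr, hc⟩ := hrc
  have hv : V.nthLeast r ∈ V := nthLeast_mem (hcard ▸ hr)
  have hrow : ∀ c' ∈ range d, tabOf k d V r c' = V.nthLeast r :=
    fun c' hc' => tabOf_of_lt hr (mem_range.mp hc')
  rw [tabOf_of_lt hr hc, tabOf_of_lt hr hc, filter_bkFree_tabOf hcard hr]
  set P := (V.nthLeast r = i ∧ i + 1 ∉ V) ∨ (V.nthLeast r = i + 1 ∧ i ∉ V)
  by_cases hiff : i ∈ V ↔ i + 1 ∈ V
  · have hP : ¬P := by rintro (⟨hvi, h⟩ | ⟨hvi, h⟩) <;> rw [hvi] at hv <;> tauto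
    rw [if_neg hP, if_neg (notMem_empty c), image_swap_of_mem_iff hiff]
  rw [nthLeast_image (strictMonoOn_swap hiff) (hcard ▸ hr)]
  by_cases hP : P
  · rw [if_pos hP, if_pos (mem_range.mpr hc)]
    rcases hP with ⟨hvi, -⟩ | ⟨hvi, -⟩
    · have hnone : (range d).filter (tabOf k d V r · = i + 1) = ∅ :=
        filter_false_of_mem fun c' hc' => by rw [hrow c' hc']; omega
      simp [hnone, hvi]
    · rw [filter_true_of_mem fun c' hc' => (hrow c' hc').trans hvi,
        show (range d).filter (· < c) = range c by ext; simp only [mem_filter, mem_range]; omega]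
      simp [hvi, hc]
  · have hvi : V.nthLeast r ≠ i :=
      fun h => hP (.inl ⟨h, fun h' => hiff ⟨fun _ => h', fun _ => h ▸ hv⟩⟩)
    have hvi' : V.nthLeast r ≠ i + 1 :=
      fun h => hP (.inr ⟨h, fun h' => hiff ⟨fun _ => h ▸ hv, fun _ => h'⟩⟩)
    rw [if_neg hP, if_neg (notMem_empty c), Equiv.swap_apply_of_ne_of_ne hvi hvi']

end KeyTableau

/-- The cycle `(1 2 ⋯ n)`, as a permutation of `ℕ`. -/
def longCycle (n : ℕ) : Equiv.Perm ℕ := (List.range' 1 n).formPerm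

section Promotion

variable {k d n : ℕ} {V : Finset ℕ}

theorem longCycle_pow_apply {x : ℕ} (hx : x ∈ Icc 1 n) (m : ℕ) :
    (longCycle n ^ m) x = (x - 1 + m) % n + 1 := by
  obtain ⟨hx1, hxn⟩ := mem_Icc.mp hx
  have h := List.formPerm_pow_apply_getElem (List.range' 1 n) (List.nodup_range' ..) m (x - 1)
    (by simp only [List.length_range']; omega)
  simp only [List.getElem_range', List.length_range'] at h
  rwa [show 1 + 1 * (x - 1) = x by omega, one_mul, add_comm 1] at h

theorem longCycle_pow_length : longCycle n ^ n = 1 := by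
  rw [longCycle]
  simpa using (List.range' 1 n).formPerm_pow_length_eq_one_of_nodup List.nodup_range'

theorem image_longCycle_pow_subset (hn : 0 < n) (hV : V ⊆ Icc 1 n) (m : ℕ) :
    V.image ⇑(longCycle n ^ m) ⊆ Icc 1 n := by
  intro y hy
  obtain ⟨x, hx, rfl⟩ := mem_image.mp hy
  rw [longCycle_pow_apply (hV hx), mem_Icc]
  have := Nat.mod_lt (x - 1 + m) hn
  omega

theorem shiftSet_eq_image_longCycle (hV : V ⊆ Icc 1 n) : shiftSet n V = V.image (longCycle n) :=
  image_congr fun x hx => by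
    simpa [Nat.sub_add_cancel (mem_Icc.mp (hV hx)).1] using
      (longCycle_pow_apply (hV hx) 1).symm

theorem iterate_shiftSet (hn : 0 < n) (hV : V ⊆ Icc 1 n) (m : ℕ) :
    (shiftSet n)^[m] V = V.image ⇑(longCycle n ^ m) := by
  induction m with
  | zero => simp
  | succ m ih =>
    rw [Function.iterate_succ_apply', ih,
      shiftSet_eq_image_longCycle (image_longCycle_pow_subset hn hV m), image_image, pow_succ',
      Equiv.Perm.coe_mul]

theorem foldr_bk_tabOf (L : List ℕ) (hL : ∀ i ∈ L, 1 ≤ i) (hcard : #V = k) :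
    L.foldr (fun i T => bk k d i T) (tabOf k d V) =
      tabOf k d (V.image ⇑(L.map fun i => Equiv.swap i (i + 1)).prod) := by
  induction L with
  | nil => simp
  | cons i L ih =>
    rw [List.foldr_cons, ih fun j hj => hL j (.tail _ hj),
      bk_tabOf (hL i (.head _)) (by rw [card_image_of_injective _ (Equiv.injective _), hcard]),
      image_image, List.map_cons, List.prod_cons, Equiv.Perm.coe_mul]

theorem promoN_tabOf (hcard : #V = k) :
    promoN k d n (tabOf k d V) = tabOf k d (V.image (longCycle n)) := by
  -- `s_1 s_2 ⋯ s_{n-1}` is the cycle `formPerm [1, …, n]`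
  have hL : ((List.range (n - 1)).map (· + 1)).map (fun i => Equiv.swap i (i + 1)) =
      List.zipWith Equiv.swap (List.range' 1 n) (List.range' 1 n).tail := by
    apply List.ext_getElem
    · simp
    · intro j h1 h2
      simp only [List.getElem_map, List.getElem_range, List.tail_range', List.getElem_zipWith,
        List.getElem_range']
      ring_nf
  have hpos : ∀ i ∈ (List.range (n - 1)).map (· + 1), 1 ≤ i := by simp
  funext r c
  rw [promoN, promo, foldr_bk_tabOf _ hpos hcard, hL, ← List.formPerm, normTab]
  split_ifs with h
  · rfl
  · exact (tabOf_of_not_lt h).symm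

theorem iterate_promoN_tabOf (hcard : #V = k) (m : ℕ) :
    (promoN k d n)^[m] (tabOf k d V) = tabOf k d (V.image ⇑(longCycle n ^ m)) := by
  induction m with
  | zero => simp
  | succ m ih =>
    rw [Function.iterate_succ_apply', ih,
      promoN_tabOf (by rw [card_image_of_injective _ (Equiv.injective _), hcard]), image_image,
      pow_succ', Equiv.Perm.coe_mul]

end Promotion

section Residue

variable {n : ℕ}

theorem res_cast (hn : 0 < n) (x : ℤ) : (res n x : ℤ) = (x - 1) % n + 1 :=
  Int.toNat_of_nonneg (by have := Int.emod_nonneg (x - 1) (by omega : (n : ℤ) ≠ 0); omega)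

theorem res_mem_Icc (hn : 0 < n) (x : ℤ) : res n x ∈ Icc 1 n := by
  have h := res_cast hn x
  have := Int.emod_nonneg (x - 1) (by omega : (n : ℤ) ≠ 0)
  have := Int.emod_lt_of_pos (x - 1) (by omega : (0 : ℤ) < n)
  rw [mem_Icc]
  omega

theorem res_modEq (hn : 0 < n) (x : ℤ) : (res n x : ℤ) ≡ x [ZMOD n] := by
  rw [res_cast hn]
  simpa using (Int.mod_modEq (x - 1) n).add_right 1

theorem res_eq_res_iff (hn : 0 < n) {x y : ℤ} : res n x = res n y ↔ x ≡ y [ZMOD n] := by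
  refine ⟨fun h => ((res_modEq hn x).symm.trans (by rw [h])).trans (res_modEq hn y), fun h => ?_⟩
  unfold res
  rw [show (x - 1) % n = (y - 1) % n from h.sub_right 1]

theorem res_add_period (hn : 0 < n) (x : ℤ) : res n (x + n) = res n x :=
  (res_eq_res_iff hn).mpr (Int.add_modEq_right ..)

theorem res_of_mem_Icc (hn : 0 < n) {x : ℤ} (h1 : 1 ≤ x) (h2 : x ≤ n) : (res n x : ℤ) = x := by
  rw [res_cast hn, Int.emod_eq_of_lt (by omega) (by omega)]
  ring

theorem res_injOn (hn : 0 < n) (c : ℤ) : Set.InjOn (res n) (Set.Ico c (c + n)) := by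
  intro x hx y hy h
  obtain ⟨hx1, hx2⟩ := hx
  obtain ⟨hy1, hy2⟩ := hy
  have := Int.eq_zero_of_abs_lt_dvd ((res_eq_res_iff hn).mp h).dvd (abs_lt.mpr ⟨by omega, by omega⟩)
  omega

theorem longCycle_pow_res (hn : 0 < n) (x : ℤ) (m : ℕ) :
    (longCycle n ^ m) (res n x) = res n (x + m) := by
  have hx := res_mem_Icc hn x
  rw [longCycle_pow_apply hx, ← (res_eq_res_iff hn).mpr ((res_modEq hn x).add_right m)]
  zify
  rw [res_cast hn]
  push_cast [Nat.cast_sub (mem_Icc.mp hx).1]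
  ring_nf

theorem Function.Periodic.sum_Icc_sub {M : Type*} [AddCommMonoid M] (hn : 0 < n) {h : ℤ → M}
    (hh : Function.Periodic h n) (j : ℤ) :
    ∑ x ∈ Icc 1 (n : ℤ), h (x - j) = ∑ x ∈ Icc 1 (n : ℤ), h x := by
  have hres : ∀ y, h (res n y) = h y := fun y => by
    obtain ⟨c, hc⟩ := (res_modEq hn y).dvd
    rw [show (res n y : ℤ) = y - c * n by linarith]
    simpa using (hh.int_mul c).sub_eq y
  have hIcc : ∀ y, (res n y : ℤ) ∈ Icc 1 (n : ℤ) := fun y => by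
    have := mem_Icc.mp (res_mem_Icc hn y)
    rw [mem_Icc]; omega
  have hinv : ∀ y ∈ Icc 1 (n : ℤ), ∀ z, (res n (res n (y + z) - z) : ℤ) = y := fun y hy z => by
    obtain ⟨h1, h2⟩ := mem_Icc.mp hy
    have hmod : (res n (y + z) : ℤ) - z ≡ y [ZMOD n] := by
      simpa using (res_modEq hn (y + z)).sub_right z
    rw [(res_eq_res_iff hn).mpr hmod, res_of_mem_Icc hn h1 h2]
  refine sum_nbij' (fun x => res n (x - j)) (fun y => res n (y + j)) (fun x _ => hIcc _)
    (fun y _ => hIcc _) (fun x hx => ?_) (fun y hy => by simpa using hinv y hy j)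
    (fun x _ => (hres _).symm)
  simpa [sub_eq_add_neg] using hinv x hx (-j)

end Residue

theorem Int.sum_Icc_one_id (n : ℕ) : ∑ i ∈ Icc (1 : ℤ) n, i = ((n + 1).choose 2 : ℕ) := by
  induction n with
  | zero => simp
  | succ n ih =>
    rw [Nat.cast_succ, ← insert_Icc_right_eq_Icc_add_one (by omega), sum_insert (by simp), ih,
      Nat.choose_succ_succ' (n + 1), Nat.choose_one_right]
    push_cast
    ring

/-- The chords `u ↦ f u` passing over `x`, i.e. with `u < x ≤ f u` (and `x - n ≤ u`, which is
automatic when `f u ≤ u + n`). -/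
noncomputable def crossing (n : ℕ) (f : ℤ → ℤ) (x : ℤ) : Finset ℤ :=
  (Icc (x - n) (x - 1)).filter (x ≤ f ·)

section Crossing

variable {n : ℕ} {f : ℤ → ℤ}

theorem apply_sub_period (hper : ∀ i, f (i + n) = f i + n) (x : ℤ) : f (x - n) = f x - n := by
  simpa using (congrArg (· - (n : ℤ)) (hper (x - n))).symm

theorem card_crossing_add_one (hn : 0 < n) (hf : Function.Bijective f)
    (hper : ∀ i, f (i + n) = f i + n) (hbnd : ∀ i, i ≤ f i ∧ f i ≤ i + n) (x : ℤ) :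
    #(crossing n f (x + 1)) = #(crossing n f x) := by
  obtain ⟨u₀, hu₀⟩ := hf.2 x
  have hx := hbnd x
  have hu₀x := hbnd u₀
  have hfx := apply_sub_period hper x
  have hne : ∀ u, u ≠ u₀ → f u ≠ x := fun u h hfu => h (hf.1 (hfu.trans hu₀.symm))
  have herase : (crossing n f (x + 1)).erase x = (crossing n f x).erase u₀ := by
    ext u
    simp only [crossing, mem_erase, mem_filter, mem_Icc]
    constructor
    · rintro ⟨hux, ⟨h1, h2⟩, h3⟩
      exact ⟨by rintro rfl; omega, ⟨by omega, by omega⟩, by omega⟩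
    · rintro ⟨huu₀, ⟨h1, h2⟩, h3⟩
      have := hne u huu₀
      refine ⟨by omega, ⟨?_, by omega⟩, by omega⟩
      by_contra hlt
      obtain rfl : u = x - n := by omega
      omega
  have hmem : x ∈ crossing n f (x + 1) ↔ u₀ ∈ crossing n f x := by
    have : u₀ = x ↔ f x = x := ⟨fun h => h ▸ hu₀, fun h => hf.1 (hu₀.trans h.symm)⟩
    simp only [crossing, mem_filter, mem_Icc]
    omega
  by_cases h : x ∈ crossing n f (x + 1)
  · rw [← card_erase_add_one h, ← card_erase_add_one (hmem.mp h), herase]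
  · rw [← erase_eq_of_notMem h, ← erase_eq_of_notMem (hmem.not.mp h), herase]

theorem card_crossing_eq_card_crossing_zero (hn : 0 < n) (hf : Function.Bijective f)
    (hper : ∀ i, f (i + n) = f i + n) (hbnd : ∀ i, i ≤ f i ∧ f i ≤ i + n) (x : ℤ) :
    #(crossing n f x) = #(crossing n f 0) := by
  induction x using Int.induction_on with
  | zero => rfl
  | succ i ih => rw [card_crossing_add_one hn hf hper hbnd, ih]
  | pred i ih =>
    rw [← ih, ← card_crossing_add_one hn hf hper hbnd, sub_add_cancel]

theorem card_crossing_eq_sum (x : ℤ) :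
    (#(crossing n f x) : ℤ) = ∑ j ∈ Icc 1 (n : ℤ), if j ≤ f (x - j) - (x - j) then 1 else 0 := by
  rw [crossing, card_filter]
  push_cast
  refine sum_nbij' (x - ·) (x - ·) (fun u hu => ?_) (fun j hj => ?_) (fun u _ => by simp)
    (fun j _ => by simp) (fun u _ => by simp)
  · simp only [mem_Icc] at hu ⊢; omega
  · simp only [mem_Icc] at hj ⊢; omega

/-- Every point is crossed by exactly `k` chords: averaging over a period, the number of
crossings is the total length `∑ (f i - i) = k n` of the chords starting in `[1, n]`. -/
theorem card_crossing {k : ℕ} (hn : 0 < n) (hf : IsBAP k n f) (x : ℤ) :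
    #(crossing n f x) = k := by
  obtain ⟨hbij, hper, hsum, hbnd⟩ := hf
  have hconst := card_crossing_eq_card_crossing_zero hn hbij hper hbnd
  have hg : Function.Periodic (fun y => f y - y) n := fun y => by simp [hper]
  have hlen : ∀ y, ∑ j ∈ Icc 1 (n : ℤ), (if j ≤ f y - y then 1 else 0 : ℤ) = f y - y := by
    intro y
    have := hbnd y
    have hfilter : (Icc 1 (n : ℤ)).filter (· ≤ f y - y) = Icc 1 (f y - y) := by
      ext
      simp only [mem_filter, mem_Icc]
      omega
    rw [sum_boole, hfilter, Int.card_Icc]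
    omega
  rw [hconst]
  suffices (n : ℤ) * #(crossing n f 0) = n * k by exact_mod_cast mul_left_cancel₀ (by omega) this
  calc (n : ℤ) * #(crossing n f 0)
      = ∑ x ∈ Icc 1 (n : ℤ), (#(crossing n f x) : ℤ) := by simp [hconst]
    _ = ∑ j ∈ Icc 1 (n : ℤ), ∑ x ∈ Icc 1 (n : ℤ),
          if j ≤ f (x - j) - (x - j) then 1 else 0 := by
        simp only [card_crossing_eq_sum]
        exact sum_comm
    _ = ∑ j ∈ Icc 1 (n : ℤ), ∑ x ∈ Icc 1 (n : ℤ), if j ≤ f x - x then 1 else 0 :=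
        sum_congr rfl fun j _ => (hg.comp fun v => if j ≤ v then 1 else 0).sum_Icc_sub hn j
    _ = ∑ x ∈ Icc 1 (n : ℤ), ∑ j ∈ Icc 1 (n : ℤ), if j ≤ f x - x then 1 else 0 := sum_comm
    _ = ∑ x ∈ Icc 1 (n : ℤ), (f x - x) := sum_congr rfl fun y _ => hlen y
    _ = n * k := by
        rw [sum_sub_distrib, hsum, Int.sum_Icc_one_id]
        ring

theorem card_filter_crossing_add_period (hper : ∀ i, f (i + n) = f i + n) {p : ℤ → Prop}
    [DecidablePred p] (hp : ∀ v, p (v + n) ↔ p v) (x : ℤ) :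
    #((crossing n f (x + n)).filter (p ∘ f)) = #((crossing n f x).filter (p ∘ f)) := by
  refine card_nbij' (· - n) (· + n) (fun u hu => ?_) (fun u hu => ?_) (fun u _ => by simp)
    (fun u _ => by simp)
  · simp only [coe_filter, crossing, mem_filter, mem_Icc, Function.comp, Set.mem_ofPred_eq] at hu ⊢
    rw [apply_sub_period hper, ← hp, sub_add_cancel]
    exact ⟨⟨⟨by omega, by omega⟩, by omega⟩, hu.2⟩
  · simp only [coe_filter, crossing, mem_filter, mem_Icc, Function.comp, Set.mem_ofPred_eq] at hu ⊢
    rw [hper, hp]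
    exact ⟨⟨⟨by omega, by omega⟩, by omega⟩, hu.2⟩

theorem card_filter_crossing_le (hn : 0 < n) (hf : Function.Bijective f)
    (hper : ∀ i, f (i + n) = f i + n) (hbnd : ∀ i, i ≤ f i ∧ f i ≤ i + n) {p : ℤ → Prop}
    [DecidablePred p] (hp : ∀ v, p (v + n) ↔ p v) {a b t : ℤ}
    (hwin : ∀ v, a ≤ v → v < a + n → (p v ↔ v < a + t)) (hab : a ≤ b) (hb : b < a + n) :
    #((crossing n f b).filter (p ∘ f)) ≤ #((crossing n f a).filter (p ∘ f)) := by
  rcases lt_or_ge b (a + t) with hbt | hbt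
  · -- a chord over `a` ending outside the window also passes over `b`
    have hsub : (crossing n f a).filter (fun u => ¬p (f u)) ⊆
        (crossing n f b).filter (fun u => ¬p (f u)) := by
      intro u hu
      simp only [crossing, mem_filter, mem_Icc] at hu ⊢
      obtain ⟨⟨⟨h1, h2⟩, h3⟩, h4⟩ := hu
      have := hbnd u
      have : ¬f u < a + t := fun h => h4 ((hwin _ h3 (by omega)).mpr h)
      exact ⟨⟨⟨by omega, by omega⟩, by omega⟩, h4⟩
    have hsplit_a := card_filter_add_card_filter_not (s := crossing n f a) (fun u => p (f u))
    have hsplit_b := card_filter_add_card_filter_not (s := crossing n f b) (fun u => p (f u))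
    have hcard := (card_crossing_eq_card_crossing_zero hn hf hper hbnd a).trans
      (card_crossing_eq_card_crossing_zero hn hf hper hbnd b).symm
    have := card_le_card hsub
    simp only [Function.comp_def]
    omega
  · -- a chord over `b` ending in the window ends beyond `a + n`, so its translate by `-n`
    -- passes over `a`
    refine card_le_card_of_injOn (· - n) (fun u hu => ?_) (fun u _ v _ h => by simpa using h)
    simp only [coe_filter, crossing, mem_filter, mem_Icc, Function.comp, Set.mem_ofPred_eq] at hu ⊢
    obtain ⟨⟨⟨h1, h2⟩, h3⟩, h4⟩ := hu
    have := hbnd u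
    have hend : a + n ≤ f u := by
      by_contra h
      exact absurd ((hwin _ (by omega) (by omega)).mp h4) (by omega)
    rw [apply_sub_period hper, ← hp, sub_add_cancel]
    exact ⟨⟨⟨by omega, by omega⟩, by omega⟩, h4⟩

end Crossing

section Necklace

variable {k n : ℕ} {f : ℤ → ℤ}

theorem necklaceOf_eq_image (a : ℕ) :
    necklaceOf n f a = (crossing n f a).image fun u => res n (f u) := rfl

theorem necklaceOf_subset (hn : 0 < n) (a : ℕ) : necklaceOf n f a ⊆ Icc 1 n := by
  intro x hx
  obtain ⟨u, -, rfl⟩ := mem_image.mp hx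
  exact res_mem_Icc hn _

/-- The ends of the chords over `x` lie in `[x, x + n)`, where `res` is injective. -/
theorem injOn_res_crossing (hn : 0 < n) (hf : Function.Injective f)
    (hbnd : ∀ i, i ≤ f i ∧ f i ≤ i + n) (x m : ℤ) :
    Set.InjOn (fun u => res n (f u + m)) (crossing n f x) := by
  intro u hu v hv h
  simp only [coe_filter, crossing, mem_Icc, Set.mem_ofPred_eq] at hu hv
  have := hbnd u
  have := hbnd v
  have := res_injOn hn (x + m) ⟨by omega, by omega⟩ ⟨by omega, by omega⟩ h
  exact hf (by omega)

theorem card_necklaceOf (hn : 0 < n) (hf : IsBAP k n f) (a : ℕ) : #(necklaceOf n f a) = k := by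
  rw [necklaceOf_eq_image, ← card_crossing hn hf a]
  exact card_image_of_injOn (by simpa using injOn_res_crossing hn hf.1.1 hf.2.2.2 a 0)

theorem card_filter_image_longCycle_pow_necklaceOf (hn : 0 < n) (hf : Function.Injective f)
    (hbnd : ∀ i, i ≤ f i ∧ f i ≤ i + n) (a m t : ℕ) :
    #(((necklaceOf n f a).image ⇑(longCycle n ^ m)).filter (· ≤ t)) =
      #((crossing n f a).filter fun u => res n (f u + m) ≤ t) := by
  rw [necklaceOf_eq_image, image_image,
    image_congr fun u _ => by exact longCycle_pow_res hn (f u) m, filter_image]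
  exact card_image_of_injOn ((injOn_res_crossing hn hf hbnd a m).mono (filter_subset _ _))

/-- Gale minimality of `I_a` in the cyclic order starting at `a`, which `χ^{1-a}` turns into the
entrywise order of sorted sets. -/
theorem nthLeast_image_necklaceOf_le (hn : 0 < n) (hf : IsBAP k n f) {a e : ℕ}
    (ha : a ∈ Icc 1 n) (he : e ∈ Icc 1 n) {r : ℕ} (hr : r < k) :
    ((necklaceOf n f a).image ⇑(longCycle n ^ (n + 1 - a))).nthLeast r ≤
      ((necklaceOf n f e).image ⇑(longCycle n ^ (n + 1 - a))).nthLeast r := by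
  set m := n + 1 - a
  have hcard : ∀ x, #((necklaceOf n f x).image ⇑(longCycle n ^ m)) = k := fun x => by
    rw [card_image_of_injective _ (Equiv.injective _), card_necklaceOf hn hf]
  obtain ⟨hbij, hper, -, hbnd⟩ := hf
  obtain ⟨ha1, han⟩ := mem_Icc.mp ha
  obtain ⟨he1, hen⟩ := mem_Icc.mp he
  refine nthLeast_le_nthLeast_of_card_filter_le (by rw [hcard, hcard]) (fun t => ?_)
    (by rwa [hcard])
  rw [card_filter_image_longCycle_pow_necklaceOf hn hbij.1 hbnd,
    card_filter_image_longCycle_pow_necklaceOf hn hbij.1 hbnd]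
  set p : ℤ → Prop := fun v => res n (v + m) ≤ t
  have hp : ∀ v, p (v + n) ↔ p v := fun v => by
    simp only [p]
    rw [add_right_comm, res_add_period hn]
  have hwin : ∀ v, (a : ℤ) ≤ v → v < a + n → (p v ↔ v < a + t) := fun v h1 h2 => by
    have : (res n (v + m) : ℤ) = v - a + 1 := by
      rw [show v + (m : ℤ) = v - a + 1 + n by omega, res_add_period hn,
        res_of_mem_Icc hn (by omega) (by omega)]
    simp only [p]
    rw [← Nat.cast_le (α := ℤ), this]
    omega
  change #((crossing n f e).filter (p ∘ f)) ≤ #((crossing n f a).filter (p ∘ f))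
  rcases le_or_gt a e with hae | hae
  · exact card_filter_crossing_le hn hbij hper hbnd hp hwin (by omega) (by omega)
  · rw [← card_filter_crossing_add_period hper hp]
    exact card_filter_crossing_le hn hbij hper hbnd hp hwin (by omega) (by omega)

end Necklace

theorem tabOf_mem_BIset {k d n : ℕ} {V W : Finset ℕ} (hV : V ⊆ Icc 1 n) (hcard : #V = k)
    (hle : ∀ r < k, W.nthLeast r ≤ V.nthLeast r) : tabOf k d V ∈ BIset k d n W :=
  ⟨isSSYT_tabOf hV hcard, fun r c hr hc => by
    rw [tabOf_of_lt hr hc, tabOf_of_lt hr hc]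
    exact hle r hr, fun _ _ h => tabOf_of_not_lt h⟩

theorem tabOf_necklaceOf_mem_cyclicDemazure {k d n : ℕ} {f : ℤ → ℤ} (hn : 0 < n)
    (hf : IsBAP k n f) {e : ℕ} (he : e ∈ Icc 1 n) :
    tabOf k d (necklaceOf n f e) ∈ cyclicDemazure k d n f := by
  simp only [cyclicDemazure, Set.mem_iInter]
  intro a ha
  have hcard : #((necklaceOf n f e).image ⇑(longCycle n ^ (n + 1 - a))) = k := by
    rw [card_image_of_injective _ (Equiv.injective _), card_necklaceOf hn hf]
  refine ⟨tabOf k d ((necklaceOf n f e).image ⇑(longCycle n ^ (n + 1 - a))), ?_, ?_⟩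
  · rw [iterate_shiftSet hn (necklaceOf_subset hn a)]
    exact tabOf_mem_BIset (image_longCycle_pow_subset hn (necklaceOf_subset hn e) _) hcard
      fun r hr => nthLeast_image_necklaceOf_le hn hf ha he hr
  · rw [iterate_promoN_tabOf hcard, image_image, ← Equiv.Perm.coe_mul, ← pow_add,
      show a - 1 + (n + 1 - a) = n by grind, longCycle_pow_length,
      Equiv.Perm.coe_one, image_id]

theorem stmt_10_general (k d n : ℕ) (hn : 0 < n) (f : ℤ → ℤ) (hf : IsBAP k n f) :
    (∀ a ∈ Finset.Icc 1 n, tabOf k d (necklaceOf n f a) ∈ cyclicDemazure k d n f) ∧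
    (cyclicDemazure k d n f).Nonempty :=
  ⟨fun _ ha => tabOf_necklaceOf_mem_cyclicDemazure hn hf ha,
    ⟨_, tabOf_necklaceOf_mem_cyclicDemazure hn hf (left_mem_Icc.mpr hn)⟩⟩

/-- For any `(k,n)`-bounded affine permutation `f` and `d ≥ 1`, the cyclic Demazure
crystal `B_f(dω_k)` contains the tableaux `T_{I_1},…,T_{I_n}` associated to the
Grassmann necklace of `f`; in particular it is nonempty. -/
theorem stmt_10 (k d n : ℕ) (hn : 0 < n) (hd : 1 ≤ d) (f : ℤ → ℤ) (hf : IsBAP k n f) :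
    (∀ a ∈ Finset.Icc 1 n, tabOf k d (necklaceOf n f a) ∈ cyclicDemazure k d n f) ∧
    (cyclicDemazure k d n f).Nonempty :=
  stmt_10_general k d n hn f hf
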